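/- Let V : ℝⁿ → ℝⁿ be Lipschitz continuous and satisfy condition (H). Then there exists C > 0 such that for all θ ∈ ℝ and x,y ∈ ℝⁿ, ‖Ψ₄^V(θ,x) − x − θV(x) − Ψ₄^V(θ,y) + y + θV(y)‖ ≤ C(θ² + |θ|⁵)‖x − y‖. -/

import Mathlib

/-! Subtracting the Euler step from one RK4 step leaves `θ / 6` times a combination of the
three differences `V (x + t • V z) - V x` (with weights `2, 2, 1`), so the stability estimate
is three instances of condition (H). If `K` is a Lipschitz constant of `V`, the stage points
`z` depend on `x` with Lipschitz constant at most `(1 + K |θ|)²`, and collecting the powers of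
`|θ|` gives `θ² (1 + (1 + |θ|) (1 + K |θ|)²) ≤ 8 (1 + K)² (θ² + |θ|⁵)`. -/

noncomputable section

/-- Euclidean space ℝⁿ. -/
abbrev Vec (n : ℕ) : Type := EuclideanSpace ℝ (Fin n)

/-- Classical fourth-order Runge–Kutta map `Ψ₄^V`. -/
def rk4 {n : ℕ} (V : Vec n → Vec n) (θ : ℝ) (x : Vec n) : Vec n :=
  x + (θ / 6) • (V x + (2 : ℝ) • V (x + (θ / 2) • V x)
    + (2 : ℝ) • V (x + (θ / 2) • V (x + (θ / 2) • V x))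
    + V (x + θ • V (x + (θ / 2) • V (x + (θ / 2) • V x))))

/-- Condition (H) on a vector field `V`. -/
def CondH {n : ℕ} (V : Vec n → Vec n) : Prop :=
  ∃ C : ℝ, 0 < C ∧ ∀ (θ : ℝ) (x y z w : Vec n),
    ‖V (x + θ • V z) + V y - V x - V (y + θ • V w)‖ ≤
      C * |θ| * (‖x - y‖ + (1 + |θ|) * ‖z - w‖)

open NNReal

lemma abs_half_le_abs (θ : ℝ) : |θ / 2| ≤ |θ| := by
  rw [abs_div, abs_two]
  exact half_le_self (abs_nonneg θ)

section NormedSpace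

variable {E : Type*} [NormedAddCommGroup E] [NormedSpace ℝ E]

def condHDefect (V : E → E) (t : ℝ) (x y z w : E) : E :=
  V (x + t • V z) + V y - V x - V (y + t • V w)

lemma condHDefect_norm_le {V : E → E} {C : ℝ} (hC0 : 0 ≤ C)
    (hC : ∀ (θ : ℝ) (x y z w : E),
      ‖condHDefect V θ x y z w‖ ≤ C * |θ| * (‖x - y‖ + (1 + |θ|) * ‖z - w‖))
    {t s G : ℝ} {x y z w : E} (hts : |t| ≤ s) (hzw : ‖z - w‖ ≤ G * ‖x - y‖) :
    ‖condHDefect V t x y z w‖ ≤ C * s * (1 + (1 + s) * G) * ‖x - y‖ :=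
  calc ‖condHDefect V t x y z w‖ ≤ C * |t| * (‖x - y‖ + (1 + |t|) * ‖z - w‖) := hC t x y z w
    _ ≤ C * s * (‖x - y‖ + (1 + s) * (G * ‖x - y‖)) := by
        have hs : 0 ≤ s := (abs_nonneg t).trans hts
        gcongr
    _ = C * s * (1 + (1 + s) * G) * ‖x - y‖ := by ring

lemma norm_smul_two_add_two_add_le (θ : ℝ) {a b c : E} {B : ℝ}
    (ha : ‖a‖ ≤ B) (hb : ‖b‖ ≤ B) (hc : ‖c‖ ≤ B) :
    ‖(θ / 6) • ((2 : ℝ) • a + (2 : ℝ) • b + c)‖ ≤ 5 / 6 * |θ| * B :=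
  calc ‖(θ / 6) • ((2 : ℝ) • a + (2 : ℝ) • b + c)‖
      ≤ |θ| / 6 * (2 * ‖a‖ + 2 * ‖b‖ + ‖c‖) := by
        rw [norm_smul, Real.norm_eq_abs, abs_div, abs_of_pos (by norm_num : (0 : ℝ) < 6)]
        gcongr
        refine norm_add₃_le.trans ?_
        simp only [norm_smul, Real.norm_ofNat, le_refl]
    _ ≤ |θ| / 6 * (2 * B + 2 * B + B) := by gcongr
    _ = 5 / 6 * |θ| * B := by ring

variable {V : E → E} {K : ℝ≥0}

lemma LipschitzWith.norm_add_smul_sub_add_smul_le (hV : LipschitzWith K V) (t : ℝ)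
    (x y z w : E) :
    ‖x + t • V z - (y + t • V w)‖ ≤ ‖x - y‖ + |t| * (K * ‖z - w‖) :=
  calc ‖x + t • V z - (y + t • V w)‖ = ‖(x - y) + t • (V z - V w)‖ := by congr 1; module
    _ ≤ ‖x - y‖ + |t| * ‖V z - V w‖ := by
        grw [norm_add_le, norm_smul, Real.norm_eq_abs]
    _ ≤ ‖x - y‖ + |t| * (K * ‖z - w‖) := by grw [hV.norm_sub_le z w]

lemma LipschitzWith.norm_rk4_stage₂_sub_le (hV : LipschitzWith K V) (θ : ℝ) (x y : E) :
    ‖x + (θ / 2) • V x - (y + (θ / 2) • V y)‖ ≤ (1 + K * |θ|) * ‖x - y‖ := by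
  calc ‖x + (θ / 2) • V x - (y + (θ / 2) • V y)‖ ≤ ‖x - y‖ + |θ / 2| * (K * ‖x - y‖) :=
        hV.norm_add_smul_sub_add_smul_le _ _ _ _ _
    _ ≤ ‖x - y‖ + |θ| * (K * ‖x - y‖) := by grw [abs_half_le_abs]
    _ = (1 + K * |θ|) * ‖x - y‖ := by ring

lemma LipschitzWith.norm_rk4_stage₃_sub_le (hV : LipschitzWith K V) (θ : ℝ) (x y : E) :
    ‖x + (θ / 2) • V (x + (θ / 2) • V x) - (y + (θ / 2) • V (y + (θ / 2) • V y))‖ ≤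
      (1 + K * |θ|) ^ 2 * ‖x - y‖ := by
  have hKθ : 0 ≤ K * |θ| := by positivity
  calc _ ≤ ‖x - y‖ + |θ / 2| * (K * ‖x + (θ / 2) • V x - (y + (θ / 2) • V y)‖) :=
        hV.norm_add_smul_sub_add_smul_le _ _ _ _ _
    _ ≤ ‖x - y‖ + |θ| * (K * ((1 + K * |θ|) * ‖x - y‖)) := by
        grw [abs_half_le_abs, hV.norm_rk4_stage₂_sub_le θ x y]
    _ = (1 + K * |θ| * (1 + K * |θ|)) * ‖x - y‖ := by ring
    _ ≤ (1 + K * |θ|) ^ 2 * ‖x - y‖ := by gcongr; nlinarith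

end NormedSpace

lemma rk4_sub_euler_sub_rk4_sub_euler {n : ℕ} (V : Vec n → Vec n) (θ : ℝ) (x y : Vec n) :
    rk4 V θ x - x - θ • V x - rk4 V θ y + y + θ • V y =
      (θ / 6) • ((2 : ℝ) • condHDefect V (θ / 2) x y x y
        + (2 : ℝ) • condHDefect V (θ / 2) x y (x + (θ / 2) • V x) (y + (θ / 2) • V y)
        + condHDefect V θ x y (x + (θ / 2) • V (x + (θ / 2) • V x))
            (y + (θ / 2) • V (y + (θ / 2) • V y))) := by
  simp only [rk4, condHDefect]
  module

lemma sq_mul_rk4_growth_le {t K : ℝ} (ht : 0 ≤ t) (hK : 0 ≤ K) :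
    t ^ 2 * (1 + (1 + t) * (1 + K * t) ^ 2) ≤ 8 * (1 + K) ^ 2 * (t ^ 2 + t ^ 5) := by
  have hKt : 1 + K * t ≤ (1 + K) * (1 + t) := by nlinarith
  have hcube : (1 + t) ^ 3 ≤ 4 * (1 + t ^ 3) := by
    have := add_pow_le zero_le_one ht 3
    norm_num at this
    linarith
  have hone : 1 ≤ (1 + K) ^ 2 * (1 + t) ^ 3 := one_le_mul_of_one_le_of_one_le
    (one_le_pow₀ (by linarith)) (one_le_pow₀ (by linarith))
  calc t ^ 2 * (1 + (1 + t) * (1 + K * t) ^ 2)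
      ≤ t ^ 2 * ((1 + K) ^ 2 * (1 + t) ^ 3 + (1 + t) * ((1 + K) * (1 + t)) ^ 2) := by
        gcongr
    _ = t ^ 2 * (2 * (1 + K) ^ 2 * (1 + t) ^ 3) := by ring
    _ ≤ t ^ 2 * (2 * (1 + K) ^ 2 * (4 * (1 + t ^ 3))) := by gcongr
    _ = 8 * (1 + K) ^ 2 * (t ^ 2 + t ^ 5) := by ring

/-- stability of the fourth-order Runge–Kutta map for a Lipschitz
vector field satisfying condition (H). -/
theorem rk4_stability {n : ℕ} (V : Vec n → Vec n)
    (hLip : ∃ L : NNReal, LipschitzWith L V) (hH : CondH V) :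
    ∃ C : ℝ, 0 < C ∧ ∀ (θ : ℝ) (x y : Vec n),
      ‖rk4 V θ x - x - θ • V x - rk4 V θ y + y + θ • V y‖ ≤
        C * (θ ^ 2 + |θ| ^ 5) * ‖x - y‖ := by
  obtain ⟨K, hV⟩ := hLip
  obtain ⟨C, hC0, hC⟩ := hH
  refine ⟨8 * C * (1 + K) ^ 2, by positivity, fun θ x y => ?_⟩
  have hG₁ : 1 ≤ 1 + K * |θ| := le_add_of_nonneg_right (by positivity)
  have hG : 1 ≤ (1 + K * |θ|) ^ 2 := one_le_pow₀ hG₁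
  have hD : ∀ {t : ℝ} {z w : Vec n}, |t| ≤ |θ| → ‖z - w‖ ≤ (1 + K * |θ|) ^ 2 * ‖x - y‖ →
      ‖condHDefect V t x y z w‖ ≤ C * |θ| * (1 + (1 + |θ|) * (1 + K * |θ|) ^ 2) * ‖x - y‖ :=
    fun ht hzw => condHDefect_norm_le hC0.le hC ht hzw
  rw [rk4_sub_euler_sub_rk4_sub_euler]
  calc _ ≤ 5 / 6 * |θ| * (C * |θ| * (1 + (1 + |θ|) * (1 + K * |θ|) ^ 2) * ‖x - y‖) :=
        norm_smul_two_add_two_add_le θ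
          (hD (abs_half_le_abs θ) (le_mul_of_one_le_left (norm_nonneg _) hG))
          (hD (abs_half_le_abs θ) ((hV.norm_rk4_stage₂_sub_le θ x y).trans
            (by grw [← le_self_pow₀ hG₁ two_ne_zero])))
          (hD le_rfl (hV.norm_rk4_stage₃_sub_le θ x y))
    _ = 5 / 6 * C * (|θ| ^ 2 * (1 + (1 + |θ|) * (1 + K * |θ|) ^ 2)) * ‖x - y‖ := by ring
    _ ≤ 5 / 6 * C * (8 * (1 + K) ^ 2 * (|θ| ^ 2 + |θ| ^ 5)) * ‖x - y‖ := by
        grw [sq_mul_rk4_growth_le (abs_nonneg θ) K.coe_nonneg]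
    _ = 5 / 6 * (8 * C * (1 + K) ^ 2 * (θ ^ 2 + |θ| ^ 5) * ‖x - y‖) := by rw [sq_abs]; ring
    _ ≤ 8 * C * (1 + K) ^ 2 * (θ ^ 2 + |θ| ^ 5) * ‖x - y‖ :=
        mul_le_of_le_one_left (by positivity) (by norm_num)
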